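/- arXiv:2502.17954 — 2 statements merged into one kernel-verified Lean document; each statement's English description precedes it below -/
import Mathlib

section
/- Let m, n ≥ 3 be integers. Then U_n divides U_m if and only if n divides m. -/
/-- The first Lucas sequence with parameters `(a, b)`:
`U 0 = 0`, `U 1 = 1`, `U (k+2) = a * U (k+1) + b * U k`. -/
def U (a b : ℤ) : ℕ → ℤ
  | 0 => 0
  | 1 => 1
  | (k + 2) => a * U a b (k + 1) + b * U a b k

/-- The second Lucas sequence with parameters `(a, b)`:
`V 0 = 2`, `V 1 = a`, `V (k+2) = a * V (k+1) + b * V k`. -/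
def V (a b : ℤ) : ℕ → ℤ
  | 0 => 2
  | 1 => a
  | (k + 2) => a * V a b (k + 1) + b * V a b k

/-- The order of appearance of `m` in the first Lucas sequence with parameters `(a, b)`:
the smallest positive integer `k` such that `m ∣ U a b k`. -/
noncomputable def tau (a b : ℤ) (m : ℤ) : ℕ :=
  sInf {k : ℕ | 0 < k ∧ m ∣ U a b k}

/-- The pair `(a, b)` is nondegenerate: `b ≠ 0` and
`(a, b) ∉ {(±2, -1), (±1, -1), (0, ±1), (±1, 0)}`. -/
def Nondegenerate (a b : ℤ) : Prop :=
  b ≠ 0 ∧ (a, b) ∉ ({(2, -1), (-2, -1), (1, -1), (-1, -1),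
    (0, 1), (0, -1), (1, 0), (-1, 0)} : Set (ℤ × ℤ))

section LucasAux

lemma U_zero (a b : ℤ) : U a b 0 = 0 := rfl
lemma U_one (a b : ℤ) : U a b 1 = 1 := rfl
lemma U_step (a b : ℤ) (k : ℕ) : U a b (k+2) = a * U a b (k+1) + b * U a b k := rfl
lemma U_two (a b : ℤ) : U a b 2 = a := by simp [U_step a b 0, U_one, U_zero]

lemma U_add (a b : ℤ) (s : ℕ) : ∀ t, U a b (s + t + 1)
    = U a b (s+1) * U a b (t+1) + b * U a b s * U a b t := by
  intro t
  induction t using Nat.twoStepInduction with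
  | zero => simp [U_one, U_zero]
  | one =>
    have h1 : s + 1 + 1 = s + 2 := by omega
    rw [h1, U_step, U_two, U_one]; ring
  | more t ih1 ih2 =>
    have h1 : s + (t+2) + 1 = (s + t + 1) + 2 := by omega
    have h2 : s + (t+1) + 1 = (s + t + 1) + 1 := by omega
    rw [h1, U_step, ih1]
    rw [h2] at ih2
    rw [ih2, U_step a b (t+1), U_step a b t]
    ring

lemma U_dvd_mul (a b : ℤ) (n q : ℕ) : U a b n ∣ U a b (n * q) := by
  induction q with
  | zero => simp [U_zero]
  | succ q ih =>
    match n, ih with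
    | 0, _ => simp [U_zero]
    | (n'+1), ih =>
      have h : (n'+1) * (q+1) = (n'+1) * q + n' + 1 := by ring
      rw [h, U_add]
      exact dvd_add (dvd_mul_left _ _) ((ih.mul_left b).mul_right _)

lemma coprime_b_U (a b : ℤ) (hab : IsCoprime a b) (n : ℕ) : IsCoprime b (U a b (n+1)) := by
  induction n using Nat.twoStepInduction with
  | zero => rw [U_one]; exact isCoprime_one_right
  | one => rw [U_two]; exact hab.symm
  | more n ih1 ih2 =>
    rw [U_step]
    have h : IsCoprime b (a * U a b (n+1+1)) := hab.symm.mul_right ih2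
    exact h.add_mul_left_right (U a b (n+1))

lemma coprime_U_succ (a b : ℤ) (hab : IsCoprime a b) (n : ℕ) :
    IsCoprime (U a b n) (U a b (n+1)) := by
  induction n with
  | zero => rw [U_zero]; exact isCoprime_zero_left.mpr (by rw [U_one]; exact isUnit_one)
  | succ n ih =>
    rw [U_step]
    have h1 : IsCoprime (U a b (n+1)) (b * U a b n) :=
      (coprime_b_U a b hab n).symm.mul_right ih.symm
    have := h1.add_mul_left_right a
    convert this using 1
    rfl
    ring

lemma dvd_U_gcd (a b : ℤ) (hab : IsCoprime a b) :
    ∀ m n : ℕ, ∀ c : ℤ, c ∣ U a b m → c ∣ U a b n → c ∣ U a b (Nat.gcd m n) := by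
  intro m
  induction m using Nat.strong_induction_on with
  | _ m ih =>
    intro n c h1 h2
    match m with
    | 0 => simpa using h2
    | (s+1) =>
      rw [Nat.gcd_rec]
      refine ih (n % (s+1)) (Nat.mod_lt _ (Nat.succ_pos s)) (s+1) c ?_ h1
      have hd : (s+1) * (n / (s+1)) + n % (s+1) = n := Nat.div_add_mod n (s+1)
      set q := n / (s+1)
      rcases Nat.eq_zero_or_pos (n % (s+1)) with h0 | hpos
      · rw [h0, U_zero]; exact dvd_zero c
      · obtain ⟨r, hr⟩ := Nat.exists_eq_add_of_le hpos
        rw [hr]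
        have hn : n = (s+1) * q + r + 1 := by omega
        rw [hn] at h2
        rw [U_add] at h2
        have hqd : c ∣ U a b ((s+1)*q) := h1.trans (U_dvd_mul a b (s+1) q)
        have h3 : c ∣ U a b ((s+1)*q + 1) * U a b (r+1) := by
          have := dvd_sub h2 ((hqd.mul_left b).mul_right (U a b r))
          simpa using this
        have hcop : IsCoprime c (U a b ((s+1)*q + 1)) :=
          IsCoprime.of_isCoprime_of_dvd_left (coprime_U_succ a b hab ((s+1)*q)) hqd
        have := hcop.dvd_of_dvd_mul_left (show c ∣ U a b ((s+1)*q+1) * U a b (r+1) from h3)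
        convert this using 2
        rfl
        omega

lemma grow_pos (a b : ℤ) (ha : 1 ≤ a) (hb : 1 ≤ b) (k : ℕ) :
    0 < U a b (k+1) ∧ U a b (k+1) ≤ U a b (k+2) := by
  induction k with
  | zero => rw [U_one, U_two]; exact ⟨one_pos, ha⟩
  | succ k ih =>
    obtain ⟨h1, h2⟩ := ih
    have h3 : 0 < U a b (k+2) := lt_of_lt_of_le h1 h2
    refine ⟨h3, ?_⟩
    rw [U_step a b (k+1)]
    nlinarith

lemma grow_neg (a b : ℤ) (ha : 3 ≤ a) (hb : b ≤ -1) (hD : 0 < a^2 + 4*b) (k : ℕ) :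
    0 < U a b (k+1) ∧ a * U a b (k+1) ≤ 2 * U a b (k+2) := by
  induction k with
  | zero =>
    rw [U_one, U_two]
    exact ⟨one_pos, by nlinarith⟩
  | succ k ih =>
    obtain ⟨h1, h2⟩ := ih
    have h3 : 0 < U a b (k+2) := by nlinarith
    refine ⟨h3, ?_⟩
    rw [U_step a b (k+1)]
    have h4 : a * (a * U a b (k+1)) ≤ a * (2 * U a b (k+2)) :=
      mul_le_mul_of_nonneg_left h2 (by linarith)
    have h5 : (0:ℤ) ≤ (a^2 + 4*b - 1) * U a b (k+1) :=
      mul_nonneg (by linarith) h1.le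
    nlinarith

lemma a_ge_three (a b : ℤ) (ha : 1 ≤ a) (hb : b ≤ -1) (hD : 0 < a^2 + 4*b) : 3 ≤ a := by
  nlinarith

lemma U_pos (a b : ℤ) (ha : 1 ≤ a) (hb : b ≠ 0) (hD : 0 < a^2 + 4*b) (k : ℕ) :
    0 < U a b (k+1) := by
  rcases lt_or_ge b 0 with h | h
  · exact (grow_neg a b (a_ge_three a b ha (by omega) hD) (by omega) hD k).1
  · exact (grow_pos a b ha (by omega) k).1

lemma U_le_succ (a b : ℤ) (ha : 1 ≤ a) (hb : b ≠ 0) (hD : 0 < a^2 + 4*b) (k : ℕ) :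
    U a b (k+1) ≤ U a b (k+2) := by
  rcases lt_or_ge b 0 with h | h
  · have h3 := a_ge_three a b ha (by omega) hD
    obtain ⟨h1, h2⟩ := grow_neg a b h3 (by omega) hD k
    nlinarith
  · exact (grow_pos a b ha (by omega) k).2

lemma U_lt_succ (a b : ℤ) (ha : 1 ≤ a) (hb : b ≠ 0) (hD : 0 < a^2 + 4*b) (k : ℕ) (hk : 2 ≤ k) :
    U a b k < U a b (k+1) := by
  obtain ⟨j, rfl⟩ : ∃ j, k = j + 2 := ⟨k - 2, by omega⟩
  rcases lt_or_ge b 0 with h | h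
  · have h3 := a_ge_three a b ha (by omega) hD
    obtain ⟨h1, h2⟩ := grow_neg a b h3 (by omega) hD (j+1)
    have e1 : j+1+1 = j+2 := by omega
    have e2 : j+1+2 = j+2+1 := by omega
    rw [e1, e2] at h2
    rw [e1] at h1
    nlinarith
  · have ⟨h1, h2⟩ := grow_pos a b ha (by omega) j
    rw [U_step a b (j+1)]
    have e1 : j+1+1 = j+2 := by omega
    rw [e1]
    have hU2 : 0 < U a b (j+2) := lt_of_lt_of_le h1 h2
    have hb1 : (1:ℤ) ≤ b := by rcases lt_or_ge 0 b with h' | h'; omega; omega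
    have p1 : (0:ℤ) ≤ (a-1) * U a b (j+2) := mul_nonneg (by linarith) hU2.le
    have p2 : (0:ℤ) ≤ (b-1) * U a b (j+1) := mul_nonneg (by linarith) h1.le
    nlinarith

lemma U_lt_of_lt (a b : ℤ) (ha : 1 ≤ a) (hb : b ≠ 0) (hD : 0 < a^2 + 4*b)
    (d n : ℕ) (hd : 1 ≤ d) (hdn : d < n) (hn : 3 ≤ n) : U a b d < U a b n := by
  have mono : ∀ j, d ≤ j → U a b d ≤ U a b j := by
    intro j hj
    induction j with
    | zero => omega
    | succ j ih =>
      rcases Nat.eq_or_lt_of_le hj with h | h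
      · rw [h]
      · have hj' : d ≤ j := by omega
        have := ih hj'
        obtain ⟨i, rfl⟩ : ∃ i, j = i + 1 := ⟨j - 1, by omega⟩
        exact le_trans this (U_le_succ a b ha hb hD i)
  obtain ⟨p, rfl⟩ : ∃ p, n = p + 1 := ⟨n - 1, by omega⟩
  exact lt_of_le_of_lt (mono p (by omega)) (U_lt_succ a b ha hb hD p (by omega))

lemma U_neg_a (a b : ℤ) (k : ℕ) : U (-a) b k = (-1)^(k+1) * U a b k := by
  induction k using Nat.twoStepInduction with
  | zero => simp [U_zero]
  | one => simp [U_one]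
  | more k ih1 ih2 =>
    rw [U_step, U_step, ih1, ih2]
    ring

lemma U_abs_pos (a b : ℤ) (ha : a ≠ 0) (hb : b ≠ 0) (hD : 0 < a^2 + 4*b) (k : ℕ) (hk : 1 ≤ k) :
    0 < |U a b k| := by
  obtain ⟨j, rfl⟩ : ∃ j, k = j + 1 := ⟨k - 1, by omega⟩
  rcases lt_or_ge 0 a with h | h
  · exact abs_pos.mpr (U_pos a b (by omega) hb hD j).ne'
  · have ha1 : 1 ≤ -a := by omega
    have hD' : 0 < (-a)^2 + 4*b := by nlinarith
    have := U_pos (-a) b ha1 hb hD' j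
    rw [U_neg_a] at this
    have : U a b (j+1) ≠ 0 := by
      intro h0; rw [h0] at this; simp at this
    exact abs_pos.mpr this

lemma U_abs_lt (a b : ℤ) (ha : a ≠ 0) (hb : b ≠ 0) (hD : 0 < a^2 + 4*b)
    (d n : ℕ) (hd : 1 ≤ d) (hdn : d < n) (hn : 3 ≤ n) : |U a b d| < |U a b n| := by
  rcases lt_or_ge 0 a with h | h
  · have h1 := U_pos a b (by omega) hb hD
    have h2 := U_lt_of_lt a b (by omega) hb hD d n hd hdn hn
    obtain ⟨i, rfl⟩ : ∃ i, d = i + 1 := ⟨d - 1, by omega⟩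
    obtain ⟨j, rfl⟩ : ∃ j, n = j + 1 := ⟨n - 1, by omega⟩
    rw [abs_of_pos (h1 i), abs_of_pos (h1 j)]; exact h2
  · have ha1 : 1 ≤ -a := by omega
    have hD' : 0 < (-a)^2 + 4*b := by nlinarith
    have h1 := U_pos (-a) b ha1 hb hD'
    have h2 := U_lt_of_lt (-a) b ha1 hb hD' d n hd hdn hn
    have e : ∀ k, |U a b k| = |U (-a) b k| := by
      intro k; rw [U_neg_a]; rw [abs_mul]; simp
    rw [e d, e n]
    obtain ⟨i, rfl⟩ : ∃ i, d = i + 1 := ⟨d - 1, by omega⟩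
    obtain ⟨j, rfl⟩ : ∃ j, n = j + 1 := ⟨n - 1, by omega⟩
    rw [abs_of_pos (h1 i), abs_of_pos (h1 j)]; exact h2

end LucasAux

theorem U_dvd_U_iff (a b : ℤ) (hab : IsCoprime a b)
    (hΔ : 0 < a ^ 2 + 4 * b) (hnd : Nondegenerate a b)
    (m n : ℕ) (hm : 3 ≤ m) (hn : 3 ≤ n) :
    U a b n ∣ U a b m ↔ n ∣ m := by
  have hb : b ≠ 0 := hnd.1
  have ha : a ≠ 0 := by
    intro h0
    subst h0
    have : IsUnit b := (isCoprime_zero_left).mp hab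
    rcases Int.isUnit_iff.mp this with h1 | h1 <;>
      exact hnd.2 (by simp [Nondegenerate, Set.mem_insert_iff, h1])
  have hD : 0 < a^2 + 4*b := by linarith [hΔ]
  constructor
  · intro h
    set g := Nat.gcd m n with hg
    have hgdvd : U a b n ∣ U a b g := dvd_U_gcd a b hab m n (U a b n) h dvd_rfl
    have hgn : g ∣ n := Nat.gcd_dvd_right m n
    have hgpos : 1 ≤ g := Nat.pos_of_ne_zero (by
      intro h0
      have := Nat.eq_zero_of_gcd_eq_zero_right h0
      omega)
    rcases Nat.lt_or_ge g n with hlt | hge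
    · exfalso
      have habs : |U a b n| ≤ |U a b g| :=
        Int.le_of_dvd (U_abs_pos a b ha hb hD g hgpos) ((abs_dvd _ _).mpr ((dvd_abs _ _).mpr hgdvd))
      have := U_abs_lt a b ha hb hD g n hgpos hlt hn
      omega
    · have : g = n := le_antisymm (Nat.le_of_dvd (by omega) hgn) hge
      rw [← this]
      exact Nat.gcd_dvd_left m n
  · intro h
    obtain ⟨q, rfl⟩ := h
    exact U_dvd_mul a b n q
end

section
/- Suppose a is odd and b ≡ 1 (mod 4). Then ν_2(U_3) = 1 and ν_2(U_6) = ν_2(a² + 3b) + 1. -/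
theorem two_adic_val_U3_U6_of_b_one_mod_four (a b : ℤ) (hab : IsCoprime a b)
    (ha : Odd a) (hb : b % 4 = 1) :
    padicValInt 2 (U a b 3) = 1 ∧
    padicValInt 2 (U a b 6) = padicValInt 2 (a ^ 2 + 3 * b) + 1 := by
  haveI : Fact (Nat.Prime 2) := ⟨Nat.prime_two⟩
  obtain ⟨k, hk⟩ := ha
  have hbm : b = 4 * (b / 4) + 1 := by omega
  set m := b / 4 with hm
  set n := k ^ 2 + k + m with hn
  have h3 : U a b 3 = a ^ 2 + b := by simp [U]; ring
  have h6 : U a b 6 = a * ((a ^ 2 + b) * (a ^ 2 + 3 * b)) := by simp [U]; ring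
  have ha0 : a ≠ 0 := by omega
  have hval_a : padicValInt 2 a = 0 := by
    apply padicValInt.eq_zero_of_not_dvd
    push_cast
    omega
  have h2 : a ^ 2 + b = 2 * (2 * n + 1) := by rw [hk, hbm, hn]; ring
  have hval2 : padicValInt 2 (a ^ 2 + b) = 1 := by
    rw [h2, padicValInt.mul (by norm_num) (by omega),
      padicValInt.eq_zero_of_not_dvd (z := 2 * n + 1) (by push_cast; omega)]
    simpa using padicValInt_self (p := 2)
  have hne2 : a ^ 2 + b ≠ 0 := by omega
  have hne3 : a ^ 2 + 3 * b ≠ 0 := by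
    intro h0
    have hdvd : b ∣ a ^ 2 := ⟨-3, by linarith⟩
    have hu : IsUnit b := (IsCoprime.pow_left hab : IsCoprime (a ^ 2) b).isUnit_of_dvd' hdvd dvd_rfl
    rw [Int.isUnit_iff] at hu
    have hb1 : b = 1 := by omega
    nlinarith [sq_nonneg a]
  constructor
  · rw [h3, hval2]
  · rw [h6, padicValInt.mul ha0 (mul_ne_zero hne2 hne3),
      padicValInt.mul hne2 hne3, hval_a, hval2]
    omega
end
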